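/- In the Poisson random-intercept model, the squared score terms are correlated: Cov((Y₁e^{−b} − 1)², (Y₂e^{−b} − 1)²) = e^{σ²}(e^{σ²} − 1) ≠ 0. In particular, Y₁e^{−b} − 1 and Y₂e^{−b} − 1 are uncorrelated but not independent. -/

import Mathlib

open MeasureTheory ProbabilityTheory
open scoped NNReal

/-- The joint law ν on ℝ × ℕ × ℕ of (b, Y₁, Y₂) in the Poisson random-intercept
model: b ~ N(0, σ²) and, conditionally on b, Y₁ and Y₂ are independent Poisson
random variables with rate e^b; b is recorded in the first coordinate. -/
noncomputable def poissonRandomInterceptLaw (σ : ℝ) : Measure (ℝ × ℕ × ℕ) :=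
  (gaussianReal 0 (Real.toNNReal (σ ^ 2))).bind fun b =>
    (Measure.dirac b).prod
      ((poissonMeasure (Real.toNNReal (Real.exp b))).prod
        (poissonMeasure (Real.toNNReal (Real.exp b))))

/-!
Conditionally on `b`, the scores `Yᵢ e^{-b} - 1` are independent, with conditional mean `0` and
conditional second moment `Var(Yᵢ) e^{-2b} = e^{-b}`; so conditional moments of products factor.
Integrating against `N(0, σ²)`, whose moment generating function is `e^{σ² t² / 2}`, gives
`E[f] = E[f g] = 0`, `E[f²] = E[g²] = E[e^{-b}] = e^{σ²/2}` and `E[f² g²] = E[e^{-2b}] = e^{2σ²}`.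
Independence of `f` and `g` would make `f²` and `g²` uncorrelated, contradicting
`e^{2σ²} ≠ e^{σ²}`.
-/

open Real
open scoped Nat

namespace ProbabilityTheory

-- The Chen–Stein identity `E[N h(N)] = r E[h(N + 1)]` for `N ~ Poisson(r)`.
lemma hasSum_poissonMeasure_mul_cast_mul (r : ℝ≥0) {h : ℕ → ℝ} {S : ℝ}
    (hS : HasSum (fun n ↦ exp (-r) * r ^ n / n ! * h (n + 1)) S) :
    HasSum (fun n ↦ exp (-r) * r ^ n / n ! * (n * h n)) (r * S) := by
  have shift : (fun n ↦ r * (exp (-r) * r ^ n / n ! * h (n + 1)))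
      = fun n : ℕ ↦ exp (-r) * r ^ (n + 1) / (n + 1)! * ((n + 1 : ℕ) * h (n + 1)) := by
    ext n
    rw [Nat.factorial_succ, Nat.cast_mul, pow_succ]
    field_simp
  have hrS := hS.mul_left (r : ℝ)
  rw [shift] at hrS
  simpa using HasSum.zero_add (f := fun n ↦ exp (-r) * r ^ n / n ! * (n * h n)) hrS

lemma hasSum_poissonMeasure_mul_cast (r : ℝ≥0) :
    HasSum (fun n ↦ exp (-r) * r ^ n / n ! * n) r := by
  have h := hasSum_poissonMeasure_mul_cast_mul r (h := 1)
    (by simpa using hasSum_one_poissonMeasure r)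
  simpa using h

lemma hasSum_poissonMeasure_mul_cast_sq (r : ℝ≥0) :
    HasSum (fun n ↦ exp (-r) * r ^ n / n ! * n ^ 2) (r * (r + 1)) := by
  have h := (hasSum_poissonMeasure_mul_cast r).add (hasSum_one_poissonMeasure r)
  simp_rw [← mul_add_one] at h
  simpa [sq] using hasSum_poissonMeasure_mul_cast_mul r (h := Nat.cast) (by exact_mod_cast h)

lemma integral_poissonMeasure_eq_of_hasSum {r : ℝ≥0} {f : ℕ → ℝ} {S : ℝ}
    (h : HasSum (fun n ↦ exp (-r) * r ^ n / n ! * f n) S) : ∫ n, f n ∂poissonMeasure r = S := by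
  simpa [integral_poissonMeasure] using h.tsum_eq

section Standardized

variable {r : ℝ≥0} {c : ℝ}

lemma integral_poissonMeasure_cast_mul_sub_one (hrc : r * c = 1) :
    ∫ n, ((n : ℝ) * c - 1) ∂poissonMeasure r = 0 := by
  have h := ((hasSum_poissonMeasure_mul_cast r).mul_right c).add
    ((hasSum_one_poissonMeasure r).mul_right (-1))
  rw [show (r : ℝ) * c + 1 * -1 = 0 by linear_combination hrc] at h
  refine integral_poissonMeasure_eq_of_hasSum ?_
  convert! h using 1
  ext n
  ring

lemma hasSum_poissonMeasure_mul_cast_mul_sub_one_sq (hrc : r * c = 1) :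
    HasSum (fun n ↦ exp (-r) * r ^ n / n ! * ((n : ℝ) * c - 1) ^ 2) c := by
  have h := (((hasSum_poissonMeasure_mul_cast_sq r).mul_right (c ^ 2)).add
    ((hasSum_poissonMeasure_mul_cast r).mul_right (-2 * c))).add (hasSum_one_poissonMeasure r)
  rw [show (r : ℝ) * (r + 1) * c ^ 2 + r * (-2 * c) + 1 = c by
    linear_combination (r * c + c - 1) * hrc] at h
  convert! h using 1
  ext n
  ring

lemma integral_poissonMeasure_cast_mul_sub_one_sq (hrc : r * c = 1) :
    ∫ n, ((n : ℝ) * c - 1) ^ 2 ∂poissonMeasure r = c :=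
  integral_poissonMeasure_eq_of_hasSum (hasSum_poissonMeasure_mul_cast_mul_sub_one_sq hrc)

lemma integrable_poissonMeasure_cast_mul_sub_one_sq (hrc : r * c = 1) :
    Integrable (fun n : ℕ ↦ ((n : ℝ) * c - 1) ^ 2) (poissonMeasure r) := by
  refine integrable_poissonMeasure_iff.2 ?_
  simpa using (hasSum_poissonMeasure_mul_cast_mul_sub_one_sq hrc).summable

end Standardized

noncomputable def poissonKernel : Kernel ℝ≥0 ℕ where
  toFun := poissonMeasure
  measurable' := by
    refine Measure.measurable_of_measurable_coe _ fun s hs ↦ ?_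
    simp_rw [poissonMeasure, Measure.sum_apply _ hs, Measure.smul_apply, smul_eq_mul]
    exact Measurable.tsum fun n ↦ by fun_prop

lemma poissonKernel_apply (r : ℝ≥0) : poissonKernel r = poissonMeasure r := rfl

instance : IsMarkovKernel poissonKernel := ⟨fun r ↦ by rw [poissonKernel_apply]; infer_instance⟩

lemma integral_exp_mul_gaussianReal (m : ℝ) (v : ℝ≥0) (t : ℝ) :
    ∫ x, exp (t * x) ∂gaussianReal m v = exp (m * t + v * t ^ 2 / 2) :=
  congrFun mgf_fun_id_gaussianReal t

section CompProdProd

variable {α β γ : Type*} {mα : MeasurableSpace α} {mβ : MeasurableSpace β}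
  {mγ : MeasurableSpace γ} {μ : Measure α} [SFinite μ] {κ : Kernel α β} {η : Kernel α γ}
  [IsSFiniteKernel κ] [IsSFiniteKernel η] {u : α → β → ℝ} {w : α → γ → ℝ}

lemma integral_compProd_prod_mul
    (h : Integrable (fun x ↦ u x.1 x.2.1 * w x.1 x.2.2) (μ ⊗ₘ (κ ×ₖ η))) :
    ∫ x, u x.1 x.2.1 * w x.1 x.2.2 ∂(μ ⊗ₘ (κ ×ₖ η))
      = ∫ a, (∫ b, u a b ∂κ a) * ∫ c, w a c ∂η a ∂μ := by
  rw [Measure.integral_compProd h]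
  congr with a
  rw [Kernel.prod_apply]
  exact integral_prod_mul (u a) (w a)

lemma integrable_compProd_prod_mul_of_nonneg (hu : ∀ a b, 0 ≤ u a b) (hw : ∀ a c, 0 ≤ w a c)
    (hm : AEStronglyMeasurable (fun x ↦ u x.1 x.2.1 * w x.1 x.2.2) (μ ⊗ₘ (κ ×ₖ η)))
    (hκ : ∀ a, Integrable (u a) (κ a)) (hη : ∀ a, Integrable (w a) (η a))
    (h : Integrable (fun a ↦ (∫ b, u a b ∂κ a) * ∫ c, w a c ∂η a) μ) :
    Integrable (fun x ↦ u x.1 x.2.1 * w x.1 x.2.2) (μ ⊗ₘ (κ ×ₖ η)) := by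
  refine (Measure.integrable_compProd_iff hm).2 ⟨ae_of_all _ fun a ↦ ?_, ?_⟩
  · rw [Kernel.prod_apply]
    exact (hκ a).mul_prod (hη a)
  · convert h using 2 with a
    simp_rw [Real.norm_of_nonneg (mul_nonneg (hu _ _) (hw _ _))]
    rw [Kernel.prod_apply]
    exact integral_prod_mul (u a) (w a)

end CompProdProd

end ProbabilityTheory

namespace PoissonRandomIntercept

noncomputable def poissonExpKernel : Kernel ℝ ℕ :=
  poissonKernel.comap (fun b ↦ (exp b).toNNReal) (by fun_prop)

instance : IsMarkovKernel poissonExpKernel := by unfold poissonExpKernel; infer_instance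

lemma poissonExpKernel_apply (b : ℝ) :
    poissonExpKernel b = poissonMeasure (exp b).toNNReal := rfl

lemma poissonRandomInterceptLaw_eq_compProd (σ : ℝ) :
    poissonRandomInterceptLaw σ
      = gaussianReal 0 (σ ^ 2).toNNReal ⊗ₘ (poissonExpKernel ×ₖ poissonExpKernel) := by
  rw [Measure.compProd_eq_comp_prod, poissonRandomInterceptLaw]
  congr with b : 1
  rw [Kernel.prod_apply, Kernel.prod_apply, Kernel.id_apply, poissonExpKernel_apply]

noncomputable def score (b : ℝ) (n : ℕ) : ℝ := n * exp (-b) - 1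

lemma toNNReal_exp_mul_exp_neg (b : ℝ) : ((exp b).toNNReal : ℝ) * exp (-b) = 1 := by
  rw [Real.coe_toNNReal _ (exp_nonneg b), ← exp_add, add_neg_cancel, exp_zero]

lemma integral_score (b : ℝ) : ∫ n, score b n ∂poissonExpKernel b = 0 :=
  integral_poissonMeasure_cast_mul_sub_one (toNNReal_exp_mul_exp_neg b)

lemma integral_score_sq (b : ℝ) : ∫ n, score b n ^ 2 ∂poissonExpKernel b = exp (-b) :=
  integral_poissonMeasure_cast_mul_sub_one_sq (toNNReal_exp_mul_exp_neg b)

lemma integrable_score_sq (b : ℝ) : Integrable (fun n ↦ score b n ^ 2) (poissonExpKernel b) :=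
  integrable_poissonMeasure_cast_mul_sub_one_sq (toNNReal_exp_mul_exp_neg b)

lemma measurable_score_fst : Measurable fun x : ℝ × ℕ × ℕ ↦ score x.1 x.2.1 := by
  unfold score; fun_prop

lemma measurable_score_snd : Measurable fun x : ℝ × ℕ × ℕ ↦ score x.1 x.2.2 := by
  unfold score; fun_prop

variable (σ : ℝ)

instance : IsProbabilityMeasure (poissonRandomInterceptLaw σ) := by
  rw [poissonRandomInterceptLaw_eq_compProd]; infer_instance

lemma integral_exp_mul_gaussianReal_zero_sq (t : ℝ) :
    ∫ b, exp (t * b) ∂gaussianReal 0 (σ ^ 2).toNNReal = exp (σ ^ 2 * t ^ 2 / 2) := by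
  rw [integral_exp_mul_gaussianReal, Real.coe_toNNReal _ (sq_nonneg σ), zero_mul, zero_add]

lemma integrable_score_fst_sq :
    Integrable (fun x ↦ score x.1 x.2.1 ^ 2) (poissonRandomInterceptLaw σ) := by
  rw [poissonRandomInterceptLaw_eq_compProd]
  simpa using integrable_compProd_prod_mul_of_nonneg (u := fun b n ↦ score b n ^ 2)
    (w := fun _ _ ↦ 1) (fun _ _ ↦ sq_nonneg _) (fun _ _ ↦ zero_le_one)
    ((measurable_score_fst.pow_const 2).mul measurable_const).aestronglyMeasurable
    integrable_score_sq (fun _ ↦ integrable_const 1)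
    (by simpa [integral_score_sq] using integrable_exp_mul_gaussianReal (-1))

lemma integrable_score_snd_sq :
    Integrable (fun x ↦ score x.1 x.2.2 ^ 2) (poissonRandomInterceptLaw σ) := by
  rw [poissonRandomInterceptLaw_eq_compProd]
  simpa using integrable_compProd_prod_mul_of_nonneg (u := fun _ _ ↦ 1)
    (w := fun b n ↦ score b n ^ 2) (fun _ _ ↦ zero_le_one) (fun _ _ ↦ sq_nonneg _)
    (measurable_const.mul (measurable_score_snd.pow_const 2)).aestronglyMeasurable
    (fun _ ↦ integrable_const 1) integrable_score_sq
    (by simpa [integral_score_sq] using integrable_exp_mul_gaussianReal (-1))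

lemma integrable_score_sq_mul_score_sq :
    Integrable (fun x ↦ score x.1 x.2.1 ^ 2 * score x.1 x.2.2 ^ 2)
      (poissonRandomInterceptLaw σ) := by
  rw [poissonRandomInterceptLaw_eq_compProd]
  refine integrable_compProd_prod_mul_of_nonneg (u := fun b n ↦ score b n ^ 2)
    (w := fun b n ↦ score b n ^ 2) (fun _ _ ↦ sq_nonneg _) (fun _ _ ↦ sq_nonneg _)
    ((measurable_score_fst.pow_const 2).mul
      (measurable_score_snd.pow_const 2)).aestronglyMeasurable
    integrable_score_sq integrable_score_sq ?_
  simp only [integral_score_sq, ← exp_add, ← two_mul, mul_neg, ← neg_mul]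
  exact integrable_exp_mul_gaussianReal (-2)

lemma memLp_score_fst : MemLp (fun x ↦ score x.1 x.2.1) 2 (poissonRandomInterceptLaw σ) :=
  (memLp_two_iff_integrable_sq measurable_score_fst.aestronglyMeasurable).2
    (integrable_score_fst_sq σ)

lemma memLp_score_snd : MemLp (fun x ↦ score x.1 x.2.2) 2 (poissonRandomInterceptLaw σ) :=
  (memLp_two_iff_integrable_sq measurable_score_snd.aestronglyMeasurable).2
    (integrable_score_snd_sq σ)

lemma integral_score_fst : ∫ x, score x.1 x.2.1 ∂poissonRandomInterceptLaw σ = 0 := by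
  have h := (memLp_score_fst σ).integrable one_le_two
  rw [poissonRandomInterceptLaw_eq_compProd] at h ⊢
  have key := integral_compProd_prod_mul (u := score) (w := fun _ _ ↦ 1) (by simpa using h)
  simpa [integral_score] using key

lemma integral_score_mul_score :
    ∫ x, score x.1 x.2.1 * score x.1 x.2.2 ∂poissonRandomInterceptLaw σ = 0 := by
  have h := (memLp_score_fst σ).integrable_mul (memLp_score_snd σ)
  rw [poissonRandomInterceptLaw_eq_compProd] at h ⊢
  rw [integral_compProd_prod_mul (u := score) (w := score) h]
  simp only [integral_score, mul_zero, integral_zero]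

lemma integral_score_fst_sq :
    ∫ x, score x.1 x.2.1 ^ 2 ∂poissonRandomInterceptLaw σ = exp (σ ^ 2 / 2) := by
  have h := integrable_score_fst_sq σ
  rw [poissonRandomInterceptLaw_eq_compProd] at h ⊢
  have key := integral_compProd_prod_mul (u := fun b n ↦ score b n ^ 2) (w := fun _ _ ↦ 1)
    (by simpa using h)
  simp only [mul_one, integral_score_sq, integral_const, probReal_univ, smul_eq_mul] at key
  rw [key]
  simpa using integral_exp_mul_gaussianReal_zero_sq σ (-1)

lemma integral_score_snd_sq :
    ∫ x, score x.1 x.2.2 ^ 2 ∂poissonRandomInterceptLaw σ = exp (σ ^ 2 / 2) := by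
  have h := integrable_score_snd_sq σ
  rw [poissonRandomInterceptLaw_eq_compProd] at h ⊢
  have key := integral_compProd_prod_mul (u := fun _ _ ↦ 1) (w := fun b n ↦ score b n ^ 2)
    (by simpa using h)
  simp only [one_mul, integral_const, probReal_univ, smul_eq_mul, integral_score_sq] at key
  rw [key]
  simpa using integral_exp_mul_gaussianReal_zero_sq σ (-1)

lemma integral_score_sq_mul_score_sq :
    ∫ x, score x.1 x.2.1 ^ 2 * score x.1 x.2.2 ^ 2 ∂poissonRandomInterceptLaw σ
      = exp (2 * σ ^ 2) := by
  have h := integrable_score_sq_mul_score_sq σ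
  rw [poissonRandomInterceptLaw_eq_compProd] at h ⊢
  rw [integral_compProd_prod_mul (u := fun b n ↦ score b n ^ 2) (w := fun b n ↦ score b n ^ 2) h]
  simp only [integral_score_sq, ← exp_add, ← two_mul, mul_neg, ← neg_mul]
  rw [integral_exp_mul_gaussianReal_zero_sq]
  ring_nf

end PoissonRandomIntercept

open PoissonRandomIntercept

/-- in the Poisson random-intercept model the squared score terms
are correlated, Cov((Y₁e^{−b}−1)², (Y₂e^{−b}−1)²) = e^{σ²}(e^{σ²}−1) ≠ 0; in
particular Y₁e^{−b}−1 and Y₂e^{−b}−1 are uncorrelated but not independent. -/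
theorem poisson_random_intercept_squared_scores_correlated (σ : ℝ) (hσ : 0 < σ) :
    let ν := poissonRandomInterceptLaw σ
    let f : ℝ × ℕ × ℕ → ℝ := fun x => (x.2.1 : ℝ) * Real.exp (-x.1) - 1
    let g : ℝ × ℕ × ℕ → ℝ := fun x => (x.2.2 : ℝ) * Real.exp (-x.1) - 1
    ((∫ x, f x ^ 2 * g x ^ 2 ∂ν) - (∫ x, f x ^ 2 ∂ν) * (∫ x, g x ^ 2 ∂ν)
        = Real.exp (σ ^ 2) * (Real.exp (σ ^ 2) - 1)) ∧
    Real.exp (σ ^ 2) * (Real.exp (σ ^ 2) - 1) ≠ 0 ∧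
    ((∫ x, f x * g x ∂ν) - (∫ x, f x ∂ν) * (∫ x, g x ∂ν) = 0) ∧
    ¬ IndepFun f g ν := by
  intro ν f g
  have hf2 : ∫ x, f x ^ 2 ∂ν = exp (σ ^ 2 / 2) := integral_score_fst_sq σ
  have hg2 : ∫ x, g x ^ 2 ∂ν = exp (σ ^ 2 / 2) := integral_score_snd_sq σ
  have hfg2 : ∫ x, f x ^ 2 * g x ^ 2 ∂ν = exp (2 * σ ^ 2) := integral_score_sq_mul_score_sq σ
  have hcov : (∫ x, f x ^ 2 * g x ^ 2 ∂ν) - (∫ x, f x ^ 2 ∂ν) * (∫ x, g x ^ 2 ∂ν)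
      = exp (σ ^ 2) * (exp (σ ^ 2) - 1) := by
    rw [hfg2, hf2, hg2, ← exp_add, mul_sub, ← exp_add]
    ring_nf
  have hne : exp (σ ^ 2) * (exp (σ ^ 2) - 1) ≠ 0 :=
    mul_ne_zero (exp_ne_zero _) (sub_ne_zero.2 (by simpa using hσ.ne'))
  refine ⟨hcov, hne, ?_, fun hind ↦ hne ?_⟩
  · have hfg : ∫ x, f x * g x ∂ν = 0 := integral_score_mul_score σ
    have hf : ∫ x, f x ∂ν = 0 := integral_score_fst σ
    rw [hfg, hf, zero_mul, sub_zero]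
  · rw [← hcov, hind.integral_fun_comp_mul_comp (f := (· ^ 2)) (g := (· ^ 2))
      measurable_score_fst.aemeasurable measurable_score_snd.aemeasurable
      (by fun_prop) (by fun_prop), sub_self]
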